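/- Let ε > 0, y ∈ ℝⁿ, λ ∈ ℝⁿ, and let D : ℝⁿ → (ℝ²)ⁿ be a linear map. Then F_ε(x) = ½‖x − y‖₂² + Σᵢ λᵢ h_ε((Dx)ᵢ) is twice continuously differentiable on ℝⁿ, and its gradient is ∇F_ε(x) = (x − y) + Σᵢ λᵢ Dᵢᵀ ∇h_ε((Dx)ᵢ), where Dᵢ : ℝⁿ → ℝ² denotes the i-th component of D and Dᵢᵀ its adjoint. -/

import Mathlib

open Real InnerProductSpace

/-- The Huber-type smoothing of the Euclidean norm on ℝ². -/
noncomputable def huber (ε : ℝ) (v : EuclideanSpace ℝ (Fin 2)) : ℝ :=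
  if ‖v‖ < ε then 3 / (4 * ε) * ‖v‖ ^ 2 - 1 / (8 * ε ^ 3) * ‖v‖ ^ 4
  else ‖v‖ - 3 * ε / 8

/-- The smoothed weighted-TV denoising functional
`F_ε(x) = ½‖x − y‖² + Σᵢ λᵢ h_ε((Dx)ᵢ)`. -/
noncomputable def Feps {n : ℕ} (ε : ℝ) (y : EuclideanSpace ℝ (Fin n)) (lam : Fin n → ℝ)
    (D : Fin n → (EuclideanSpace ℝ (Fin n) →L[ℝ] EuclideanSpace ℝ (Fin 2)))
    (x : EuclideanSpace ℝ (Fin n)) : ℝ :=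
  1 / 2 * ‖x - y‖ ^ 2 + ∑ i, lam i * huber ε (D i x)

/-- `huber` as a function of the squared norm. -/
noncomputable def phiH (ε t : ℝ) : ℝ :=
  if t < ε ^ 2 then 3 / (4 * ε) * t - 1 / (8 * ε ^ 3) * t ^ 2 else Real.sqrt t - 3 * ε / 8

noncomputable def phiH' (ε t : ℝ) : ℝ :=
  if t < ε ^ 2 then 3 / (4 * ε) - t / (4 * ε ^ 3) else 1 / (2 * Real.sqrt t)

noncomputable def phiH'' (ε t : ℝ) : ℝ :=
  -(1 / (4 * Real.sqrt (max t (ε ^ 2)) ^ 3))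

lemma huber_eq_phiH (ε : ℝ) (v : EuclideanSpace ℝ (Fin 2)) (hε : 0 < ε) :
    huber ε v = phiH ε (‖v‖ ^ 2) := by
  have h : ‖v‖ ^ 2 < ε ^ 2 ↔ ‖v‖ < ε := pow_lt_pow_iff_left₀ (norm_nonneg v) hε.le two_ne_zero
  by_cases hv : ‖v‖ < ε
  · simp only [huber, phiH, if_pos hv, if_pos (h.2 hv)]
    ring
  · simp only [huber, phiH, if_neg hv, if_neg (fun hh => hv (h.1 hh)),
      Real.sqrt_sq (norm_nonneg v)]

lemma hasDerivAt_phiH_poly (ε : ℝ) (s : ℝ) :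
    HasDerivAt (fun u => 3 / (4 * ε) * u - 1 / (8 * ε ^ 3) * u ^ 2)
      (3 / (4 * ε) - s / (4 * ε ^ 3)) s := by
  have h := ((hasDerivAt_id s).const_mul (3 / (4 * ε))).sub
    ((hasDerivAt_pow 2 s).const_mul (1 / (8 * ε ^ 3)))
  refine h.congr_deriv ?_
  ring

lemma phiH_poly_boundary (ε : ℝ) (hε : 0 < ε) :
    3 / (4 * ε) * ε ^ 2 - 1 / (8 * ε ^ 3) * (ε ^ 2) ^ 2 = Real.sqrt (ε ^ 2) - 3 * ε / 8 := by
  rw [Real.sqrt_sq hε.le]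
  field_simp
  ring

lemma hasDerivAt_phiH (ε : ℝ) (hε : 0 < ε) (t : ℝ) :
    HasDerivAt (phiH ε) (phiH' ε t) t := by
  have hε2 : (0 : ℝ) < ε ^ 2 := by positivity
  rcases lt_trichotomy t (ε ^ 2) with ht | ht | ht
  · have hev : phiH ε =ᶠ[nhds t] fun u => 3 / (4 * ε) * u - 1 / (8 * ε ^ 3) * u ^ 2 := by
      filter_upwards [Iio_mem_nhds ht] with u hu
      rw [phiH, if_pos (Set.mem_Iio.1 hu)]
    rw [phiH', if_pos ht]
    exact (hasDerivAt_phiH_poly ε t).congr_of_eventuallyEq hev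
  · subst ht
    have hval : phiH' ε (ε ^ 2) = 1 / (2 * ε) := by
      rw [phiH', if_neg (lt_irrefl _), Real.sqrt_sq hε.le]
    rw [hval]
    have hleft : HasDerivWithinAt (phiH ε) (1 / (2 * ε)) (Set.Iic (ε ^ 2)) (ε ^ 2) := by
      have h := (hasDerivAt_phiH_poly ε (ε ^ 2)).hasDerivWithinAt (s := Set.Iic (ε ^ 2))
      have h2 : HasDerivWithinAt (phiH ε)
          (3 / (4 * ε) - ε ^ 2 / (4 * ε ^ 3)) (Set.Iic (ε ^ 2)) (ε ^ 2) := by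
        refine h.congr (fun u hu => ?_) ?_
        · rcases lt_or_eq_of_le (Set.mem_Iic.1 hu) with hu' | hu'
          · rw [phiH, if_pos hu']
          · subst hu'
            rw [phiH, if_neg (lt_irrefl _), phiH_poly_boundary ε hε]
        · rw [phiH, if_neg (lt_irrefl _), phiH_poly_boundary ε hε]
      convert h2 using 1
      field_simp
      ring
    have hright : HasDerivWithinAt (phiH ε) (1 / (2 * ε)) (Set.Ici (ε ^ 2)) (ε ^ 2) := by
      have h := (((hasDerivAt_sqrt hε2.ne').sub_const
        (3 * ε / 8)).hasDerivWithinAt (s := Set.Ici (ε ^ 2)))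
      have h2 : HasDerivWithinAt (phiH ε)
          (1 / (2 * Real.sqrt (ε ^ 2))) (Set.Ici (ε ^ 2)) (ε ^ 2) := by
        refine h.congr (fun u hu => ?_) ?_
        · rw [phiH, if_neg (not_lt.2 (Set.mem_Ici.1 hu))]
        · rw [phiH, if_neg (lt_irrefl _)]
      rwa [Real.sqrt_sq hε.le] at h2
    have := hleft.union hright
    rwa [Set.Iic_union_Ici, hasDerivWithinAt_univ] at this
  · have hev : phiH ε =ᶠ[nhds t] fun u => Real.sqrt u - 3 * ε / 8 := by
      filter_upwards [Ioi_mem_nhds ht] with u hu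
      rw [phiH, if_neg (not_lt.2 (Set.mem_Ioi.1 hu).le)]
    rw [phiH', if_neg (not_lt.2 ht.le)]
    exact ((hasDerivAt_sqrt (hε2.trans ht).ne').sub_const (3 * ε / 8)).congr_of_eventuallyEq hev

lemma hasDerivAt_phiH'_lin (ε : ℝ) (s : ℝ) :
    HasDerivAt (fun u => 3 / (4 * ε) - u / (4 * ε ^ 3)) (-(1 / (4 * ε ^ 3))) s := by
  exact ((hasDerivAt_id s).div_const (4 * ε ^ 3)).const_sub (3 / (4 * ε))

lemma hasDerivAt_phiH'_sqrt (ε : ℝ) {s : ℝ} (hs : 0 < s) :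
    HasDerivAt (fun u => 1 / (2 * Real.sqrt u)) (-(1 / (4 * Real.sqrt s ^ 3))) s := by
  have hsq : Real.sqrt s ≠ 0 := (Real.sqrt_pos.2 hs).ne'
  have h2 : (2 : ℝ) * Real.sqrt s ≠ 0 := by positivity
  have h := ((hasDerivAt_sqrt hs.ne').const_mul 2).inv h2
  have heq : (fun u => 1 / (2 * Real.sqrt u)) = fun u => (2 * Real.sqrt u)⁻¹ := by
    funext u; rw [one_div]
  rw [heq]
  refine h.congr_deriv ?_
  have : Real.sqrt s ^ 2 = s := Real.sq_sqrt hs.le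
  field_simp
  nlinarith [this]

lemma phiH''_of_le (ε : ℝ) (hε : 0 < ε) {t : ℝ} (ht : t ≤ ε ^ 2) :
    phiH'' ε t = -(1 / (4 * ε ^ 3)) := by
  rw [phiH'', max_eq_right ht, Real.sqrt_sq hε.le]

lemma phiH''_of_ge (ε : ℝ) {t : ℝ} (ht : ε ^ 2 ≤ t) :
    phiH'' ε t = -(1 / (4 * Real.sqrt t ^ 3)) := by
  rw [phiH'', max_eq_left ht]

lemma hasDerivAt_phiH' (ε : ℝ) (hε : 0 < ε) (t : ℝ) :
    HasDerivAt (phiH' ε) (phiH'' ε t) t := by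
  have hε2 : (0 : ℝ) < ε ^ 2 := by positivity
  rcases lt_trichotomy t (ε ^ 2) with ht | ht | ht
  · have hev : phiH' ε =ᶠ[nhds t] fun u => 3 / (4 * ε) - u / (4 * ε ^ 3) := by
      filter_upwards [Iio_mem_nhds ht] with u hu
      rw [phiH', if_pos (Set.mem_Iio.1 hu)]
    rw [phiH''_of_le ε hε ht.le]
    exact (hasDerivAt_phiH'_lin ε t).congr_of_eventuallyEq hev
  · subst ht
    have hbv : phiH' ε (ε ^ 2) = 3 / (4 * ε) - ε ^ 2 / (4 * ε ^ 3) := by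
      rw [phiH', if_neg (lt_irrefl _), Real.sqrt_sq hε.le]
      field_simp
      ring
    rw [phiH''_of_le ε hε le_rfl]
    have hleft : HasDerivWithinAt (phiH' ε) (-(1 / (4 * ε ^ 3))) (Set.Iic (ε ^ 2)) (ε ^ 2) := by
      refine ((hasDerivAt_phiH'_lin ε (ε ^ 2)).hasDerivWithinAt).congr (fun u hu => ?_) ?_
      · rcases lt_or_eq_of_le (Set.mem_Iic.1 hu) with hu' | hu'
        · rw [phiH', if_pos hu']
        · subst hu'; exact hbv
      · exact hbv
    have hright : HasDerivWithinAt (phiH' ε) (-(1 / (4 * ε ^ 3))) (Set.Ici (ε ^ 2)) (ε ^ 2) := by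
      have h := (hasDerivAt_phiH'_sqrt ε hε2).hasDerivWithinAt (s := Set.Ici (ε ^ 2))
      have h2 : HasDerivWithinAt (phiH' ε)
          (-(1 / (4 * Real.sqrt (ε ^ 2) ^ 3))) (Set.Ici (ε ^ 2)) (ε ^ 2) := by
        refine h.congr (fun u hu => ?_) ?_
        · rw [phiH', if_neg (not_lt.2 (Set.mem_Ici.1 hu))]
        · rw [phiH', if_neg (lt_irrefl _)]
      rwa [Real.sqrt_sq hε.le] at h2
    have := hleft.union hright
    rwa [Set.Iic_union_Ici, hasDerivWithinAt_univ] at this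
  · have hev : phiH' ε =ᶠ[nhds t] fun u => 1 / (2 * Real.sqrt u) := by
      filter_upwards [Ioi_mem_nhds ht] with u hu
      rw [phiH', if_neg (not_lt.2 (Set.mem_Ioi.1 hu).le)]
    rw [phiH''_of_ge ε ht.le]
    exact (hasDerivAt_phiH'_sqrt ε (hε2.trans ht)).congr_of_eventuallyEq hev

lemma continuous_phiH'' (ε : ℝ) (hε : 0 < ε) : Continuous (phiH'' ε) := by
  have hε2 : (0 : ℝ) < ε ^ 2 := by positivity
  have hm : Continuous fun t : ℝ => Real.sqrt (max t (ε ^ 2)) :=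
    Real.continuous_sqrt.comp (continuous_id.max continuous_const)
  have hne : ∀ t : ℝ, 4 * Real.sqrt (max t (ε ^ 2)) ^ 3 ≠ 0 := by
    intro t
    have : 0 < Real.sqrt (max t (ε ^ 2)) :=
      Real.sqrt_pos.2 (lt_of_lt_of_le hε2 (le_max_right _ _))
    positivity
  exact ((continuous_const.div (continuous_const.mul (hm.pow 3)) hne)).neg

lemma contDiff_phiH (ε : ℝ) (hε : 0 < ε) : ContDiff ℝ 2 (phiH ε) := by
  have hd1 : deriv (phiH ε) = phiH' ε := funext fun t => (hasDerivAt_phiH ε hε t).deriv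
  have hd2 : deriv (phiH' ε) = phiH'' ε := funext fun t => (hasDerivAt_phiH' ε hε t).deriv
  rw [show (2 : WithTop ℕ∞) = 1 + 1 from by norm_num, contDiff_succ_iff_deriv]
  refine ⟨fun t => (hasDerivAt_phiH ε hε t).differentiableAt, by simp, ?_⟩
  rw [hd1, contDiff_one_iff_deriv, hd2]
  exact ⟨fun t => (hasDerivAt_phiH' ε hε t).differentiableAt, continuous_phiH'' ε hε⟩

lemma contDiff_huber (ε : ℝ) (hε : 0 < ε) : ContDiff ℝ 2 (huber ε) := by
  have h : huber ε = fun v => phiH ε (‖v‖ ^ 2) := funext fun v => huber_eq_phiH ε v hε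
  rw [h]
  exact (contDiff_phiH ε hε).comp (contDiff_norm_sq ℝ)

lemma hasGradientAt_huber (ε : ℝ) (hε : 0 < ε) (v : EuclideanSpace ℝ (Fin 2)) :
    HasGradientAt (huber ε) ((2 * phiH' ε (‖v‖ ^ 2)) • v) v := by
  have hhe : huber ε = fun w => phiH ε (‖w‖ ^ 2) := funext fun w => huber_eq_phiH ε w hε
  have h1 : HasFDerivAt (fun w : EuclideanSpace ℝ (Fin 2) => ‖w‖ ^ 2)
      (2 • (innerSL ℝ v)) v := (hasStrictFDerivAt_norm_sq v).hasFDerivAt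
  have h2 := (hasDerivAt_phiH ε hε (‖v‖ ^ 2)).comp_hasFDerivAt v h1
  rw [hasGradientAt_iff_hasFDerivAt]
  have heq : (toDual ℝ (EuclideanSpace ℝ (Fin 2))) ((2 * phiH' ε (‖v‖ ^ 2)) • v)
      = phiH' ε (‖v‖ ^ 2) • (2 • (innerSL ℝ v)) := by
    ext w
    simp only [toDual_apply_apply, ContinuousLinearMap.smul_apply, innerSL_apply_apply,
      real_inner_smul_left, smul_eq_mul]
    ring
  rw [hhe, heq]
  exact h2

/-- For `ε > 0`, `F_ε` is twice continuously differentiable, with gradient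
`∇F_ε(x) = (x − y) + Σᵢ λᵢ Dᵢᵀ ∇h_ε((Dx)ᵢ)`. -/
theorem stmt_7 {n : ℕ} (ε : ℝ) (hε : 0 < ε) (y : EuclideanSpace ℝ (Fin n))
    (lam : Fin n → ℝ)
    (D : Fin n → (EuclideanSpace ℝ (Fin n) →L[ℝ] EuclideanSpace ℝ (Fin 2))) :
    ContDiff ℝ 2 (Feps ε y lam D) ∧
    ∀ x : EuclideanSpace ℝ (Fin n),
      gradient (Feps ε y lam D) x =
        (x - y) + ∑ i, lam i •
          (ContinuousLinearMap.adjoint (D i)) (gradient (huber ε) (D i x)) := by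
  constructor
  · have h1 : ContDiff ℝ 2 fun x : EuclideanSpace ℝ (Fin n) => 1 / 2 * ‖x - y‖ ^ 2 :=
      contDiff_const.mul (((contDiff_id.sub contDiff_const)).norm_sq ℝ)
    have h2 : ContDiff ℝ 2 fun x : EuclideanSpace ℝ (Fin n) =>
        ∑ i, lam i * huber ε (D i x) :=
      ContDiff.sum fun i _ =>
        contDiff_const.mul ((contDiff_huber ε hε).comp (D i).contDiff)
    exact h1.add h2
  · intro x
    apply HasGradientAt.gradient
    rw [hasGradientAt_iff_hasFDerivAt]
    have hq : HasFDerivAt (fun z : EuclideanSpace ℝ (Fin n) => 1 / 2 * ‖z - y‖ ^ 2)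
        ((1 / 2 : ℝ) • (2 • (innerSL ℝ (x - y)).comp
          (ContinuousLinearMap.id ℝ (EuclideanSpace ℝ (Fin n))))) x :=
      (((hasFDerivAt_id x).sub_const y).norm_sq).const_mul (1 / 2)
    have hi : ∀ i, HasFDerivAt (fun z : EuclideanSpace ℝ (Fin n) => lam i * huber ε (D i z))
        (lam i • ((toDual ℝ (EuclideanSpace ℝ (Fin 2))
          (gradient (huber ε) (D i x))).comp (D i))) x := by
      intro i
      have hg : HasGradientAt (huber ε) (gradient (huber ε) (D i x)) (D i x) :=
        (hasGradientAt_huber ε hε (D i x)).differentiableAt.hasGradientAt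
      exact ((hg.hasFDerivAt).comp x (D i).hasFDerivAt).const_mul (lam i)
    have htot := hq.add (HasFDerivAt.fun_sum (fun i (_ : i ∈ Finset.univ) => hi i))
    refine htot.congr_fderiv ?_
    ext w
    simp only [toDual_apply_apply, ContinuousLinearMap.add_apply, ContinuousLinearMap.smul_apply,
      ContinuousLinearMap.coe_sum', Finset.sum_apply, ContinuousLinearMap.comp_apply,
      ContinuousLinearMap.coe_id', id_eq, innerSL_apply_apply, inner_add_left, sum_inner,
      real_inner_smul_left, smul_eq_mul, ContinuousLinearMap.adjoint_inner_left]
    ring
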